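/- arXiv:2212.01690 — 3 statements merged into one kernel-verified Lean document; each statement's English description precedes it below -/
import Mathlib

section
/- Let B be a separable Banach space, (ε_n)_{n∈ℤ} an i.i.d. sequence of B-valued random variables in L^p (p ≥ 1), and (ρ_n)_{n∈ℤ} an i.i.d. sequence of bounded linear operators on B, independent of (ε_n), with E‖ρ_0‖^p < 1. Then the series X_n = μ + Σ_{j=0}^∞ A_{n,j} ε_{n-j}, where A_{n,0} = I and A_{n,j} = ρ_n ∘ ⋯ ∘ ρ_{n-j+1} for j ≥ 1, converges absolutely almost surely and in L^p_B. -/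
open MeasureTheory Filter Topology ProbabilityTheory
noncomputable section

/-- An i.i.d. sequence indexed by `ℤ`. -/
def IIDZ {Ω : Type*} [MeasurableSpace Ω] {E : Type*} [MeasurableSpace E]
    (X : ℤ → Ω → E) (μ : Measure Ω) : Prop :=
  iIndepFun X μ ∧ ∀ n, IdentDistrib (X n) (X 0) μ μ

/-- Strict stationarity of a `ℤ`-indexed process: the law of the whole path is
shift invariant. -/
def StrictlyStationary {Ω : Type*} [MeasurableSpace Ω] {E : Type*} [MeasurableSpace E]
    (X : ℤ → Ω → E) (μ : Measure Ω) : Prop :=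
  ∀ k : ℤ, IdentDistrib (fun ω (n : ℤ) => X n ω) (fun ω (n : ℤ) => X (n + k) ω) μ μ

/-- `prodOp ρ n j = ρ_n ∘ ⋯ ∘ ρ_{n-j+1}` (random products of operators), with
`prodOp ρ n 0 = I`. -/
def prodOp {Ω : Type*} {B : Type*} [NormedAddCommGroup B] [NormedSpace ℝ B]
    (ρ : ℤ → Ω → B →L[ℝ] B) : ℤ → ℕ → Ω → B →L[ℝ] B
  | _, 0, _ => ContinuousLinearMap.id ℝ B
  | n, (j+1), ω => (ρ n ω).comp (prodOp ρ (n-1) j ω)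

/-- The (cross-)covariance operator `C_{X,Y}(x*) = E (x*(X) • Y)`, as a map from the
dual of `B` to `B`. -/
def covFn {Ω : Type*} [MeasurableSpace Ω] {B : Type*} [NormedAddCommGroup B]
    [NormedSpace ℝ B] [CompleteSpace B] (μ : Measure Ω) (X Y : Ω → B) :
    (B →L[ℝ] ℝ) → B :=
  fun f => ∫ ω, f (X ω) • Y ω ∂μ

/-- The nuclear norm of a map `T : B* → B`: the infimum of `∑ ‖x_j**‖ ‖y_j‖` over all
nuclear representations `T x* = ∑ x_j**(x*) • y_j`. -/
def nuclearNorm {B : Type*} [NormedAddCommGroup B] [NormedSpace ℝ B]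
    (T : (B →L[ℝ] ℝ) → B) : ℝ :=
  sInf { c | ∃ (g : ℕ → ((B →L[ℝ] ℝ) →L[ℝ] ℝ)) (y : ℕ → B),
    Summable (fun j => ‖g j‖ * ‖y j‖) ∧ c = ∑' j, ‖g j‖ * ‖y j‖ ∧
    ∀ f, T f = ∑' j, g j f • y j }

/-- `B` is `r`-smooth: there is an equivalent norm `N` such that
`sup_{t>0} t^{-r} sup { N(x+ty) + N(x-ty) - 2 : N x = N y = 1 } < ∞`. -/
def RSmooth (B : Type*) [NormedAddCommGroup B] [NormedSpace ℝ B] (r : ℝ) : Prop :=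
  ∃ N : B → ℝ, (∀ x y : B, N (x + y) ≤ N x + N y) ∧
    (∀ (a : ℝ) (x : B), N (a • x) = |a| * N x) ∧
    (∃ c C : ℝ, 0 < c ∧ ∀ x : B, c * ‖x‖ ≤ N x ∧ N x ≤ C * ‖x‖) ∧
    ∃ K : ℝ, ∀ t : ℝ, 0 < t → ∀ x y : B, N x = 1 → N y = 1 →
      N (x + t • y) + N (x - t • y) - 2 ≤ K * t ^ r

variable {Ω : Type*} [MeasurableSpace Ω]
  {B : Type*} [NormedAddCommGroup B] [NormedSpace ℝ B] [CompleteSpace B]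
  [TopologicalSpace.SeparableSpace B] [MeasurableSpace B] [BorelSpace B]
  [MeasurableSpace (B →L[ℝ] B)] [BorelSpace (B →L[ℝ] B)]

/-! Since `‖A_{n,j}‖ ≤ ‖ρ_n‖ ⋯ ‖ρ_{n-j+1}‖` and the factors are independent of each other and of
`ε_{n-j}`, `E‖A_{n,j} ε_{n-j}‖^p ≤ (E‖ρ_0‖^p)^j E‖ε_0‖^p`: the `L^p` norms of the terms decay
geometrically. A series with summable `L^p` norms converges in the complete space `L^p_B`, and the
norms of its terms are almost surely summable. -/

open scoped ENNReal

section LpSeries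

variable {α E : Type*} [MeasurableSpace α] {μ : Measure α} [NormedAddCommGroup E] [CompleteSpace E]

theorem exists_tendsto_eLpNorm_sum_range_sub {p : ℝ≥0∞} [Fact (1 ≤ p)] {f : ℕ → α → E}
    (hf : ∀ n, AEStronglyMeasurable (f n) μ) (hsum : ∑' n, eLpNorm (f n) p μ ≠ ∞) :
    ∃ S : α → E, Tendsto (fun m => eLpNorm (fun a => ∑ j ∈ Finset.range m, f j a - S a) p μ)
      atTop (𝓝 0) := by
  have hmem (n : ℕ) : MemLp (f n) p μ := ⟨hf n, (ENNReal.le_tsum n).trans_lt hsum.lt_top⟩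
  set F : ℕ → Lp E p μ := fun n => (hmem n).toLp (f n)
  have hF : Summable F := Summable.of_enorm <| by simpa [F] using hsum
  refine ⟨⇑(∑' n, F n), ?_⟩
  refine ((Lp.tendsto_Lp_iff_tendsto_eLpNorm' _ _).1 hF.hasSum.tendsto_sum_nat).congr
    fun m => eLpNorm_congr_ae ?_
  have hsum_coe : ⇑(∑ j ∈ Finset.range m, F j) =ᵐ[μ] fun a => ∑ j ∈ Finset.range m, f j a := by
    filter_upwards [Lp.coeFn_fun_finsetSum (Finset.range m) F,
      ae_all_iff.2 fun j => (hmem j).coeFn_toLp] with a ha hfa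
    simp only [ha, F, hfa]
  filter_upwards [hsum_coe] with a ha
  simp only [Pi.sub_apply, ha]

end LpSeries

section ProdOp

variable {E : Type*} [NormedAddCommGroup E] [NormedSpace ℝ E]

theorem enorm_prodOp_le {Ω : Type*} (ρ : ℤ → Ω → E →L[ℝ] E) (ω : Ω) :
    ∀ (j : ℕ) (n : ℤ), ‖prodOp ρ n j ω‖ₑ ≤ ∏ i ∈ Finset.range j, ‖ρ (n - i) ω‖ₑ
  | 0, n => by
    simpa [prodOp] using (ContinuousLinearMap.id ℝ E).opENorm_le_bound (M := 1) fun x => by simp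
  | j + 1, n => by
    calc ‖prodOp ρ n (j + 1) ω‖ₑ ≤ ‖ρ n ω‖ₑ * ‖prodOp ρ (n - 1) j ω‖ₑ :=
          ContinuousLinearMap.opENorm_comp_le _ _
      _ ≤ ‖ρ n ω‖ₑ * ∏ i ∈ Finset.range j, ‖ρ (n - 1 - i) ω‖ₑ := by
          gcongr; exact enorm_prodOp_le ρ ω j (n - 1)
      _ = ∏ i ∈ Finset.range (j + 1), ‖ρ (n - i) ω‖ₑ := by
          rw [Finset.prod_range_succ', mul_comm]
          simp [sub_sub, add_comm]

theorem measurable_prodOp_apply [MeasurableSpace E] [BorelSpace E] [SecondCountableTopology E]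
    [MeasurableSpace (E →L[ℝ] E)] [BorelSpace (E →L[ℝ] E)]
    {ρ : ℤ → Ω → E →L[ℝ] E} (hρ : ∀ k, Measurable (ρ k)) {X : Ω → E} (hX : Measurable X) :
    ∀ (j : ℕ) (n : ℤ), Measurable fun ω => prodOp ρ n j ω (X ω)
  | 0, n => by simpa [prodOp] using hX
  | j + 1, n => show Measurable fun ω => ρ n ω (prodOp ρ (n - 1) j ω (X ω)) from
    isBoundedBilinearMap_apply.continuous.measurable2 (hρ n)
      (measurable_prodOp_apply hρ hX j (n - 1))

end ProdOp

section Moments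

variable {μ : Measure Ω}

theorem lintegral_prod_range_sub_eq_pow {X : ℤ → Ω → ℝ≥0∞} (hX : iIndepFun X μ)
    (hXm : ∀ k, Measurable (X k)) (hXid : ∀ k, IdentDistrib (X k) (X 0) μ μ) (n : ℤ) (j : ℕ) :
    ∫⁻ ω, ∏ i ∈ Finset.range j, X (n - i) ω ∂μ = (∫⁻ ω, X 0 ω ∂μ) ^ j := by
  have hinj : Function.Injective fun i : ℕ => n - i := fun i i' h => by simpa using h
  rw [lintegral_prod_eq_prod_lintegral_of_indepFun _ _ (hX.precomp hinj) fun i => hXm _]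
  simp [(hXid _).lintegral_eq]

theorem lintegral_enorm_rpow_eq_ofReal_integral {E : Type*} [NormedAddCommGroup E] {f : Ω → E}
    {p : ℝ} (hp : 0 ≤ p) (hf : Integrable (fun ω => ‖f ω‖ ^ p) μ) :
    ∫⁻ ω, ‖f ω‖ₑ ^ p ∂μ = ENNReal.ofReal (∫ ω, ‖f ω‖ ^ p ∂μ) := by
  rw [ofReal_integral_eq_lintegral_ofReal hf (ae_of_all _ fun ω => by positivity)]
  refine lintegral_congr fun ω => ?_
  rw [← ofReal_norm, ENNReal.ofReal_rpow_of_nonneg (norm_nonneg _) hp]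

variable {E : Type*} [NormedAddCommGroup E] [NormedSpace ℝ E] [MeasurableSpace E] [BorelSpace E]
  [MeasurableSpace (E →L[ℝ] E)] [BorelSpace (E →L[ℝ] E)]
  {ρ : ℤ → Ω → E →L[ℝ] E} {ε : ℤ → Ω → E}

theorem lintegral_enorm_prodOp_apply_rpow_le (hρm : ∀ k, Measurable (ρ k))
    (hεm : ∀ k, Measurable (ε k)) (hρ : iIndepFun ρ μ) (hρid : ∀ k, IdentDistrib (ρ k) (ρ 0) μ μ)
    (hεid : ∀ k, IdentDistrib (ε k) (ε 0) μ μ)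
    (hindep : IndepFun (fun ω (k : ℤ) => ρ k ω) (fun ω (k : ℤ) => ε k ω) μ)
    {p : ℝ} (hp : 0 ≤ p) (n : ℤ) (j : ℕ) :
    ∫⁻ ω, ‖prodOp ρ n j ω (ε (n - j) ω)‖ₑ ^ p ∂μ
      ≤ (∫⁻ ω, ‖ρ 0 ω‖ₑ ^ p ∂μ) ^ j * ∫⁻ ω, ‖ε 0 ω‖ₑ ^ p ∂μ := by
  set F : Ω → ℝ≥0∞ := fun ω => ∏ i ∈ Finset.range j, ‖ρ (n - i) ω‖ₑ ^ p
  set G : Ω → ℝ≥0∞ := fun ω => ‖ε (n - j) ω‖ₑ ^ p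
  have hpointwise (ω : Ω) : ‖prodOp ρ n j ω (ε (n - j) ω)‖ₑ ^ p ≤ F ω * G ω := by
    calc ‖prodOp ρ n j ω (ε (n - j) ω)‖ₑ ^ p
        ≤ ((∏ i ∈ Finset.range j, ‖ρ (n - i) ω‖ₑ) * ‖ε (n - j) ω‖ₑ) ^ p :=
          ENNReal.rpow_le_rpow ((prodOp ρ n j ω).le_opENorm_of_le le_rfl |>.trans
            (by gcongr; exact enorm_prodOp_le ρ ω j n)) hp
      _ = F ω * G ω := by
          rw [ENNReal.mul_rpow_of_nonneg _ _ hp, ← ENNReal.prod_rpow_of_nonneg hp]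
  have hFG : IndepFun F G μ :=
    hindep.comp (Finset.measurable_prod _ fun i _ => (measurable_pi_apply _).enorm.pow_const p)
      ((measurable_pi_apply _).enorm.pow_const p)
  have hF : ∫⁻ ω, F ω ∂μ = (∫⁻ ω, ‖ρ 0 ω‖ₑ ^ p ∂μ) ^ j :=
    lintegral_prod_range_sub_eq_pow (hρ.comp _ fun _ => measurable_enorm.pow_const p)
      (fun k => (hρm k).enorm.pow_const p)
      (fun k => (hρid k).comp (measurable_enorm.pow_const p)) n j
  have hG : ∫⁻ ω, G ω ∂μ = ∫⁻ ω, ‖ε 0 ω‖ₑ ^ p ∂μ :=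
    ((hεid _).comp (measurable_enorm.pow_const p)).lintegral_eq
  calc ∫⁻ ω, ‖prodOp ρ n j ω (ε (n - j) ω)‖ₑ ^ p ∂μ ≤ ∫⁻ ω, F ω * G ω ∂μ :=
        lintegral_mono hpointwise
    _ = _ := by
        rw [lintegral_mul_eq_lintegral_mul_lintegral_of_indepFun''
          (Finset.measurable_prod _ fun i _ => (hρm _).enorm.pow_const p).aemeasurable
          ((hεm _).enorm.pow_const p).aemeasurable hFG, hF, hG]

theorem tsum_eLpNorm_prodOp_apply_ne_top (hρm : ∀ k, Measurable (ρ k))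
    (hεm : ∀ k, Measurable (ε k)) (hρ : iIndepFun ρ μ) (hρid : ∀ k, IdentDistrib (ρ k) (ρ 0) μ μ)
    (hεid : ∀ k, IdentDistrib (ε k) (ε 0) μ μ)
    (hindep : IndepFun (fun ω (k : ℤ) => ρ k ω) (fun ω (k : ℤ) => ε k ω) μ)
    {p : ℝ} (hp : 0 < p) (hρlt : ∫⁻ ω, ‖ρ 0 ω‖ₑ ^ p ∂μ < 1) (hε : ∫⁻ ω, ‖ε 0 ω‖ₑ ^ p ∂μ ≠ ∞)
    (n : ℤ) :
    ∑' j : ℕ, eLpNorm (fun ω => prodOp ρ n j ω (ε (n - j) ω)) (ENNReal.ofReal p) μ ≠ ∞ := by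
  set a := ∫⁻ ω, ‖ρ 0 ω‖ₑ ^ p ∂μ
  set c := ∫⁻ ω, ‖ε 0 ω‖ₑ ^ p ∂μ
  have hbound (j : ℕ) : eLpNorm (fun ω => prodOp ρ n j ω (ε (n - j) ω)) (ENNReal.ofReal p) μ
      ≤ (a ^ (1 / p)) ^ j * c ^ (1 / p) := by
    rw [eLpNorm_eq_lintegral_rpow_enorm_toReal (ENNReal.ofReal_pos.2 hp).ne' ENNReal.ofReal_ne_top,
      ENNReal.toReal_ofReal hp.le]
    calc _ ≤ (a ^ j * c) ^ (1 / p) := by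
          gcongr
          exact lintegral_enorm_prodOp_apply_rpow_le hρm hεm hρ hρid hεid hindep hp.le n j
      _ = (a ^ (1 / p)) ^ j * c ^ (1 / p) := by
          rw [ENNReal.mul_rpow_of_nonneg _ _ (by positivity), ← ENNReal.rpow_natCast,
            ← ENNReal.rpow_mul, mul_comm (j : ℝ), ENNReal.rpow_mul, ENNReal.rpow_natCast]
  refine ne_top_of_le_ne_top ?_ (ENNReal.tsum_le_tsum hbound)
  rw [ENNReal.tsum_mul_right, ENNReal.tsum_geometric]
  exact ENNReal.mul_ne_top
    (ENNReal.inv_ne_top.2 (tsub_pos_of_lt (ENNReal.rpow_lt_one hρlt (by positivity))).ne')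
    (ENNReal.rpow_ne_top_of_nonneg (by positivity) hε)

end Moments

theorem brca_series_converges_general
    (μ : Measure Ω) (μ0 : B)
    (ρ : ℤ → Ω → B →L[ℝ] B) (ε : ℤ → Ω → B)
    (hρmeas : ∀ n, Measurable (ρ n)) (hεmeas : ∀ n, Measurable (ε n))
    (hρiid : IIDZ ρ μ) (hεiid : IIDZ ε μ)
    (hindep : IndepFun (fun ω (n : ℤ) => ρ n ω) (fun ω (n : ℤ) => ε n ω) μ)
    (p : ℝ) (hp : 1 ≤ p)
    (hεp : Integrable (fun ω => ‖ε 0 ω‖ ^ p) μ)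
    (hρp : Integrable (fun ω => ‖ρ 0 ω‖ ^ p) μ)
    (hρlt : ∫ ω, ‖ρ 0 ω‖ ^ p ∂μ < 1) :
    ∀ n : ℤ,
      (∀ᵐ ω ∂μ, Summable (fun j : ℕ => ‖prodOp ρ n j ω (ε (n - j) ω)‖)) ∧
      ∃ S : Ω → B,
        Tendsto (fun m : ℕ =>
            eLpNorm (fun ω =>
              (μ0 + ∑ j ∈ Finset.range m, prodOp ρ n j ω (ε (n - j) ω)) - S ω)
            (ENNReal.ofReal p) μ) atTop (𝓝 0) := by
  have : SecondCountableTopology B := UniformSpace.secondCountable_of_separable B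
  have : Fact (1 ≤ ENNReal.ofReal p) := ⟨ENNReal.one_le_ofReal.2 hp⟩
  have hp0 : 0 < p := zero_lt_one.trans_le hp
  have hρlt' : ∫⁻ ω, ‖ρ 0 ω‖ₑ ^ p ∂μ < 1 := by
    rw [lintegral_enorm_rpow_eq_ofReal_integral hp0.le hρp]
    exact ENNReal.ofReal_lt_one.2 hρlt
  have hεp' : ∫⁻ ω, ‖ε 0 ω‖ₑ ^ p ∂μ ≠ ∞ := by
    rw [lintegral_enorm_rpow_eq_ofReal_integral hp0.le hεp]
    exact ENNReal.ofReal_ne_top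
  intro n
  have hmeas (j : ℕ) : AEStronglyMeasurable (fun ω => prodOp ρ n j ω (ε (n - j) ω)) μ :=
    (measurable_prodOp_apply hρmeas (hεmeas _) j n).aestronglyMeasurable
  have hsum := tsum_eLpNorm_prodOp_apply_ne_top hρmeas hεmeas hρiid.1 hρiid.2 hεiid.2 hindep hp0
    hρlt' hεp' n
  obtain ⟨S, hS⟩ := exists_tendsto_eLpNorm_sum_range_sub hmeas hsum
  refine ⟨summable_norm_of_tsum_eLpNorm_ne_top Fact.out hmeas hsum, fun ω => μ0 + S ω, ?_⟩
  simpa only [add_sub_add_left_eq_sub] using hS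

/-- Existence: the series `X_n = μ₀ + ∑_{j≥0} A_{n,j} ε_{n-j}` converges absolutely a.s.
and in `L^p`. -/
theorem brca_series_converges
    (μ : Measure Ω) [IsProbabilityMeasure μ] (μ0 : B)
    (ρ : ℤ → Ω → B →L[ℝ] B) (ε : ℤ → Ω → B)
    (hρmeas : ∀ n, Measurable (ρ n)) (hεmeas : ∀ n, Measurable (ε n))
    (hρiid : IIDZ ρ μ) (hεiid : IIDZ ε μ)
    (hindep : IndepFun (fun ω (n : ℤ) => ρ n ω) (fun ω (n : ℤ) => ε n ω) μ)
    (p : ℝ) (hp : 1 ≤ p)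
    (hεp : Integrable (fun ω => ‖ε 0 ω‖ ^ p) μ)
    (hρp : Integrable (fun ω => ‖ρ 0 ω‖ ^ p) μ)
    (hρlt : ∫ ω, ‖ρ 0 ω‖ ^ p ∂μ < 1) :
    ∀ n : ℤ,
      (∀ᵐ ω ∂μ, Summable (fun j : ℕ => ‖prodOp ρ n j ω (ε (n - j) ω)‖)) ∧
      ∃ S : Ω → B,
        Tendsto (fun m : ℕ =>
            eLpNorm (fun ω =>
              (μ0 + ∑ j ∈ Finset.range m, prodOp ρ n j ω (ε (n - j) ω)) - S ω)
            (ENNReal.ofReal p) μ) atTop (𝓝 0) :=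
  brca_series_converges_general μ μ0 ρ ε hρmeas hεmeas hρiid hεiid hindep p hp hεp hρp hρlt
end
end

section
/- Under the assumptions that (ε_n) is i.i.d. in L^p_B with mean zero, (ρ_n) is i.i.d. in L(B) independent of (ε_n), and E‖ρ_0‖_L^p < 1 (p ≥ 1), the process X_n = μ + Σ_{j=0}^∞ A_{n,j} ε_{n-j} satisfies the recursion X_n − μ = ρ_n(X_{n-1} − μ) + ε_n for all n ∈ ℤ. -/
open MeasureTheory Filter Topology ProbabilityTheory
noncomputable section

/-!
Since `A_{n,j+1} = ρ_n ∘ A_{n-1,j}` and `ρ_n` is continuous and linear, the recursion holds at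
every `ω` where the series for `X_{n-1}` converges (otherwise `tsum` is `0` and it may fail).
Convergence is almost sure: the `j`-th term is dominated by
`‖ρ_n‖ ⋯ ‖ρ_{n-j+1}‖ ‖ε_{n-j}‖`, whose expectation is `(E‖ρ_0‖)^j E‖ε_0‖` by independence, and
`E‖ρ_0‖ ≤ (E‖ρ_0‖^p)^{1/p} < 1`, so the dominating series has finite expectation.
-/

open scoped ENNReal

section Operators

variable {Ω : Type*} {E : Type*} [NormedAddCommGroup E] [NormedSpace ℝ E]

theorem prodOp_succ_apply (ρ : ℤ → Ω → E →L[ℝ] E) (n : ℤ) (j : ℕ) (ω : Ω) (x : E) :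
    prodOp ρ n (j + 1) ω x = ρ n ω (prodOp ρ (n - 1) j ω x) :=
  rfl

theorem enorm_prodOp_apply_le (ρ : ℤ → Ω → E →L[ℝ] E) (j : ℕ) (n : ℤ) (ω : Ω) (x : E) :
    ‖prodOp ρ n j ω x‖ₑ ≤ (∏ i ∈ Finset.range j, ‖ρ (n - i) ω‖ₑ) * ‖x‖ₑ := by
  induction j generalizing n with
  | zero => simp [prodOp]
  | succ j ih =>
    have hreindex : ∏ i ∈ Finset.range (j + 1), ‖ρ (n - i) ω‖ₑ
        = ‖ρ n ω‖ₑ * ∏ i ∈ Finset.range j, ‖ρ (n - 1 - i) ω‖ₑ := by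
      rw [Finset.prod_range_succ', mul_comm]
      push_cast
      simp only [sub_zero, sub_add_eq_sub_sub_swap]
    calc ‖prodOp ρ n (j + 1) ω x‖ₑ ≤ ‖ρ n ω‖ₑ * ‖prodOp ρ (n - 1) j ω x‖ₑ :=
          (ρ n ω).le_opENorm _
      _ ≤ ‖ρ n ω‖ₑ * ((∏ i ∈ Finset.range j, ‖ρ (n - 1 - i) ω‖ₑ) * ‖x‖ₑ) := by
          gcongr
          exact ih _
      _ = _ := by rw [hreindex, mul_assoc]

theorem tsum_prodOp_apply_eq {ρ : ℤ → Ω → E →L[ℝ] E} {ε : ℤ → Ω → E} {n : ℤ} {ω : Ω}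
    (hsum : Summable fun j : ℕ => prodOp ρ (n - 1) j ω (ε (n - 1 - j) ω)) :
    ∑' j : ℕ, prodOp ρ n j ω (ε (n - j) ω)
      = ρ n ω (∑' j : ℕ, prodOp ρ (n - 1) j ω (ε (n - 1 - j) ω)) + ε n ω := by
  have hshift (j : ℕ) : prodOp ρ n (j + 1) ω (ε (n - (j + 1 : ℕ)) ω)
      = ρ n ω (prodOp ρ (n - 1) j ω (ε (n - 1 - j) ω)) := by
    rw [prodOp_succ_apply, Nat.cast_succ, sub_add_eq_sub_sub_swap]
  have htail : Summable fun j : ℕ => prodOp ρ n (j + 1) ω (ε (n - (j + 1 : ℕ)) ω) := by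
    simpa only [hshift] using hsum.mapL (ρ n ω)
  rw [tsum_eq_zero_add' (f := fun j : ℕ => prodOp ρ n j ω (ε (n - j) ω)) htail,
    tsum_congr hshift, ← (ρ n ω).map_tsum hsum, add_comm, Nat.cast_zero, sub_zero]
  rfl

end Operators

section Moments

variable {Ω : Type*} [MeasurableSpace Ω] {μ : Measure Ω}

theorem lintegral_enorm_le_integral_norm_rpow [IsProbabilityMeasure μ]
    {F : Type*} [NormedAddCommGroup F] [MeasurableSpace F] [OpensMeasurableSpace F]
    {f : Ω → F} (hf : Measurable f) {p : ℝ} (hp : 1 ≤ p)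
    (hint : Integrable (fun ω => ‖f ω‖ ^ p) μ) :
    ∫⁻ ω, ‖f ω‖ₑ ∂μ ≤ ENNReal.ofReal ((∫ ω, ‖f ω‖ ^ p ∂μ) ^ p⁻¹) := by
  have hp0 : 0 < p := zero_lt_one.trans_le hp
  have hp0' : ENNReal.ofReal p ≠ 0 := by simpa using hp0
  -- `f` itself need not be strongly measurable, but its norm is.
  have hmeas : AEStronglyMeasurable (fun ω => ‖f ω‖) μ := hf.norm.aestronglyMeasurable
  have hmem : MemLp (fun ω => ‖f ω‖) (ENNReal.ofReal p) μ := by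
    rw [← integrable_norm_rpow_iff hmeas hp0' ENNReal.ofReal_ne_top,
      ENNReal.toReal_ofReal hp0.le]
    simpa only [norm_norm] using hint
  calc ∫⁻ ω, ‖f ω‖ₑ ∂μ = eLpNorm (fun ω => ‖f ω‖) 1 μ := by
        simp only [eLpNorm_one_eq_lintegral_enorm, enorm_norm]
    _ ≤ eLpNorm (fun ω => ‖f ω‖) (ENNReal.ofReal p) μ :=
      eLpNorm_le_eLpNorm_of_exponent_le (ENNReal.one_le_ofReal.2 hp) hmeas
    _ = _ := by
      rw [hmem.eLpNorm_eq_integral_rpow_norm hp0' ENNReal.ofReal_ne_top,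
        ENNReal.toReal_ofReal hp0.le]
      simp only [norm_norm]

variable {F G : Type*} [TopologicalSpace F] [ContinuousENorm F] [MeasurableSpace F]
  [OpensMeasurableSpace F] [TopologicalSpace G] [ContinuousENorm G] [MeasurableSpace G]
  [OpensMeasurableSpace G]

theorem lintegral_prod_enorm_eq_pow {X : ℤ → Ω → F} (hmeas : ∀ n, Measurable (X n))
    (hX : IIDZ X μ) (n : ℤ) (j : ℕ) :
    ∫⁻ ω, ∏ i ∈ Finset.range j, ‖X (n - i) ω‖ₑ ∂μ = (∫⁻ ω, ‖X 0 ω‖ₑ ∂μ) ^ j := by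
  have hinj : Function.Injective fun i : ℕ => n - i := fun i i' h => by simpa using h
  have hind : iIndepFun (fun (i : ℕ) ω => ‖X (n - i) ω‖ₑ) μ :=
    (hX.1.precomp hinj).comp (fun _ => enorm) fun _ => measurable_enorm
  have hident (k : ℤ) : ∫⁻ ω, ‖X k ω‖ₑ ∂μ = ∫⁻ ω, ‖X 0 ω‖ₑ ∂μ :=
    ((hX.2 k).comp measurable_enorm).lintegral_eq
  rw [lintegral_prod_eq_prod_lintegral_of_indepFun _ _ hind fun i => (hmeas _).enorm,
    Finset.prod_congr rfl fun i _ => hident _, Finset.prod_const, Finset.card_range]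

theorem lintegral_prod_enorm_mul_enorm_eq {X : ℤ → Ω → F} {Y : ℤ → Ω → G}
    (hXmeas : ∀ n, Measurable (X n)) (hYmeas : ∀ n, Measurable (Y n)) (hX : IIDZ X μ)
    (hY : ∀ n, IdentDistrib (Y n) (Y 0) μ μ)
    (hXY : IndepFun (fun ω (n : ℤ) => X n ω) (fun ω (n : ℤ) => Y n ω) μ) (n : ℤ) (j : ℕ) :
    ∫⁻ ω, (∏ i ∈ Finset.range j, ‖X (n - i) ω‖ₑ) * ‖Y (n - j) ω‖ₑ ∂μ
      = (∫⁻ ω, ‖X 0 ω‖ₑ ∂μ) ^ j * ∫⁻ ω, ‖Y 0 ω‖ₑ ∂μ := by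
  have hind : IndepFun (fun ω => ∏ i ∈ Finset.range j, ‖X (n - i) ω‖ₑ)
      (fun ω => ‖Y (n - j) ω‖ₑ) μ :=
    hXY.comp (φ := fun x : ℤ → F => ∏ i ∈ Finset.range j, ‖x (n - i)‖ₑ)
      (ψ := fun y : ℤ → G => ‖y (n - j)‖ₑ) (by fun_prop) (by fun_prop)
  have hident : ∫⁻ ω, ‖Y (n - j) ω‖ₑ ∂μ = ∫⁻ ω, ‖Y 0 ω‖ₑ ∂μ :=
    ((hY _).comp measurable_enorm).lintegral_eq
  rw [lintegral_mul_eq_lintegral_mul_lintegral_of_indepFun'' (by fun_prop) (by fun_prop) hind,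
    lintegral_prod_enorm_eq_pow hXmeas hX, hident]

end Moments

section Summability

variable {Ω : Type*} [MeasurableSpace Ω] {μ : Measure Ω}
  {E : Type*} [NormedAddCommGroup E] [NormedSpace ℝ E] [CompleteSpace E]
  [MeasurableSpace E] [OpensMeasurableSpace E]
  [MeasurableSpace (E →L[ℝ] E)] [OpensMeasurableSpace (E →L[ℝ] E)]

theorem ae_summable_prodOp_apply {ρ : ℤ → Ω → E →L[ℝ] E} {ε : ℤ → Ω → E}
    (hρmeas : ∀ n, Measurable (ρ n)) (hεmeas : ∀ n, Measurable (ε n)) (hρ : IIDZ ρ μ)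
    (hε : ∀ n, IdentDistrib (ε n) (ε 0) μ μ)
    (hindep : IndepFun (fun ω (n : ℤ) => ρ n ω) (fun ω (n : ℤ) => ε n ω) μ)
    (hρ1 : ∫⁻ ω, ‖ρ 0 ω‖ₑ ∂μ < 1) (hε1 : ∫⁻ ω, ‖ε 0 ω‖ₑ ∂μ ≠ ∞) (n : ℤ) :
    ∀ᵐ ω ∂μ, Summable fun j : ℕ => prodOp ρ n j ω (ε (n - j) ω) := by
  have hmeas (j : ℕ) :
      Measurable fun ω => (∏ i ∈ Finset.range j, ‖ρ (n - i) ω‖ₑ) * ‖ε (n - j) ω‖ₑ := by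
    fun_prop
  have hfin : ∫⁻ ω, ∑' j : ℕ, (∏ i ∈ Finset.range j, ‖ρ (n - i) ω‖ₑ) * ‖ε (n - j) ω‖ₑ ∂μ
      ≠ ∞ := by
    rw [lintegral_tsum fun j => (hmeas j).aemeasurable]
    simp only [lintegral_prod_enorm_mul_enorm_eq hρmeas hεmeas hρ hε hindep n]
    rw [ENNReal.tsum_mul_right, ENNReal.tsum_geometric]
    exact ENNReal.mul_ne_top (ENNReal.inv_ne_top.2 (tsub_pos_of_lt hρ1).ne') hε1
  filter_upwards [ae_lt_top (Measurable.tsum hmeas) hfin] with ω hω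
  exact Summable.of_enorm <| ne_top_of_le_ne_top hω.ne <|
    ENNReal.tsum_le_tsum fun j => enorm_prodOp_apply_le ρ j n ω _

end Summability

variable {Ω : Type*} [MeasurableSpace Ω]
  {B : Type*} [NormedAddCommGroup B] [NormedSpace ℝ B] [CompleteSpace B]
  [TopologicalSpace.SeparableSpace B] [MeasurableSpace B] [BorelSpace B]
  [MeasurableSpace (B →L[ℝ] B)] [BorelSpace (B →L[ℝ] B)]

theorem brca_series_solves_recursion_general
    (μ : Measure Ω) [IsProbabilityMeasure μ] (μ0 : B)
    (ρ : ℤ → Ω → B →L[ℝ] B) (ε : ℤ → Ω → B)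
    (hρmeas : ∀ n, Measurable (ρ n)) (hεmeas : ∀ n, Measurable (ε n))
    (hρiid : IIDZ ρ μ) (hεiid : IIDZ ε μ)
    (hindep : IndepFun (fun ω (n : ℤ) => ρ n ω) (fun ω (n : ℤ) => ε n ω) μ)
    (p : ℝ) (hp : 1 ≤ p)
    (hεp : Integrable (fun ω => ‖ε 0 ω‖ ^ p) μ)
    (hρp : Integrable (fun ω => ‖ρ 0 ω‖ ^ p) μ)
    (hρlt : ∫ ω, ‖ρ 0 ω‖ ^ p ∂μ < 1)
    (X : ℤ → Ω → B)
    (hX : ∀ n ω, X n ω = μ0 + ∑' j : ℕ, prodOp ρ n j ω (ε (n - j) ω)) :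
    ∀ n : ℤ, ∀ᵐ ω ∂μ, X n ω - μ0 = ρ n ω (X (n-1) ω - μ0) + ε n ω := by
  have hρ1 : ∫⁻ ω, ‖ρ 0 ω‖ₑ ∂μ < 1 := by
    refine (lintegral_enorm_le_integral_norm_rpow (hρmeas 0) hp hρp).trans_lt ?_
    refine ENNReal.ofReal_lt_one.2 (Real.rpow_lt_one ?_ hρlt (by positivity))
    exact integral_nonneg fun ω => by positivity
  have hε1 : ∫⁻ ω, ‖ε 0 ω‖ₑ ∂μ ≠ ∞ :=
    ne_top_of_le_ne_top ENNReal.ofReal_ne_top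
      (lintegral_enorm_le_integral_norm_rpow (hεmeas 0) hp hεp)
  intro n
  filter_upwards [ae_summable_prodOp_apply hρmeas hεmeas hρiid hεiid.2 hindep hρ1 hε1 (n - 1)]
    with ω hsum
  rw [hX, hX, add_sub_cancel_left, add_sub_cancel_left, tsum_prodOp_apply_eq hsum]

/-- The series `X_n = μ₀ + ∑_{j≥0} A_{n,j} ε_{n-j}` satisfies the BRCA(1) recursion
`X_n - μ₀ = ρ_n (X_{n-1} - μ₀) + ε_n`. -/
theorem brca_series_solves_recursion
    (μ : Measure Ω) [IsProbabilityMeasure μ] (μ0 : B)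
    (ρ : ℤ → Ω → B →L[ℝ] B) (ε : ℤ → Ω → B)
    (hρmeas : ∀ n, Measurable (ρ n)) (hεmeas : ∀ n, Measurable (ε n))
    (hρiid : IIDZ ρ μ) (hεiid : IIDZ ε μ)
    (hindep : IndepFun (fun ω (n : ℤ) => ρ n ω) (fun ω (n : ℤ) => ε n ω) μ)
    (p : ℝ) (hp : 1 ≤ p)
    (hεmean : ∫ ω, ε 0 ω ∂μ = 0)
    (hεp : Integrable (fun ω => ‖ε 0 ω‖ ^ p) μ)
    (hρp : Integrable (fun ω => ‖ρ 0 ω‖ ^ p) μ)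
    (hρlt : ∫ ω, ‖ρ 0 ω‖ ^ p ∂μ < 1)
    (X : ℤ → Ω → B)
    (hX : ∀ n ω, X n ω = μ0 + ∑' j : ℕ, prodOp ρ n j ω (ε (n - j) ω)) :
    ∀ n : ℤ, ∀ᵐ ω ∂μ, X n ω - μ0 = ρ n ω (X (n-1) ω - μ0) + ε n ω :=
  brca_series_solves_recursion_general μ μ0 ρ ε hρmeas hεmeas hρiid hεiid hindep p hp hεp hρp hρlt X
    hX
end
end

section
/- Let B be an r-smooth separable Banach space for some r ∈ (1,2]. Then there exists a constant D ≥ 1 such that for every sequence (ξ_i)_{i=1}^n of B-valued martingale differences, E‖ξ_1 + ⋯ + ξ_n‖_B^r ≤ D Σ_{i=1}^n E‖ξ_i‖_B^r. -/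
/-!
Pass to an equivalent norm `N` whose modulus of smoothness is `O(t ^ r)`. Smoothness at `x`,
together with a Hahn–Banach support functional `g` of `N` at `x`, gives the first order bound
`N (x + y) ^ r ≤ N x ^ r + r N x ^ (r - 1) g y + D N y ^ r` with `D` depending only on the modulus.
Taking `x = S_{k-1}` and `y = ξ_k`, the linear term has expectation zero because `ξ_k` is a
martingale difference, so `E N(S_k) ^ r ≤ E N(S_{k-1}) ^ r + D E N(ξ_k) ^ r`, and one iterates.
Since `g` depends on `S_{k-1}` in a non-measurable way, `S_{k-1}` is first rounded to a countable
dense set (separability); the rounding error vanishes as the rounding is refined.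
-/

open MeasureTheory Filter Topology ProbabilityTheory
open scoped ENNReal NNReal
noncomputable section

section RealInequalities
variable {r : ℝ}

lemma one_add_rpow_le_one_add_mul_add_sq (hr1 : 1 ≤ r) (hr2 : r ≤ 2) {u : ℝ} (hu : -1 ≤ u) :
    (1 + u) ^ r ≤ 1 + r * u + u ^ 2 := by
  have h0 : 0 ≤ 1 + u := by linarith
  have hsplit : (1 + u) ^ r = (1 + u) * (1 + u) ^ (r - 1) := by
    rw [← Real.rpow_one_add' h0 (by linarith)]
    ring_nf
  have hbern : (1 + u) ^ (r - 1) ≤ 1 + (r - 1) * u :=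
    rpow_one_add_le_one_add_mul_self hu (by linarith) (by linarith)
  rw [hsplit]
  nlinarith [mul_le_mul_of_nonneg_left hbern h0]

/-- The graph of the convex function `t ↦ t ^ r` lies above its tangent at `s + δ`. -/
lemma add_rpow_le_rpow_add_mul (hr : 1 ≤ r) {s δ : ℝ} (hs : 0 ≤ s) (hδ : 0 ≤ δ) :
    (s + δ) ^ r ≤ s ^ r + r * δ * (s + δ) ^ (r - 1) := by
  rcases (add_nonneg hs hδ).eq_or_lt with h | h
  · rw [← h, Real.zero_rpow (by linarith)]
    positivity
  · have hbern := one_add_mul_self_le_rpow_one_add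
      (neg_le_neg ((div_le_one h).2 (by linarith))) hr
    rw [show 1 + -(δ / (s + δ)) = s / (s + δ) by field_simp; ring, Real.div_rpow hs h.le,
      le_div_iff₀ (by positivity)] at hbern
    rw [Real.rpow_sub_one h.ne']
    field_simp at hbern ⊢
    linarith

lemma rpow_le_of_le_of_one_le {p v w : ℝ} (hp0 : 0 ≤ p) (hp1 : p ≤ 1) (hv : 0 ≤ v)
    (hvw : v ≤ w) (hw : 1 ≤ w) : v ^ p ≤ w :=
  (Real.rpow_le_rpow hv hvw hp0).trans (Real.rpow_le_self_of_one_le hw hp1)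

lemma add_rpow_le_rpow_add_mul_add_one (hr1 : 1 ≤ r) (hr2 : r ≤ 2) {s δ : ℝ} (hs : 0 ≤ s)
    (hδ0 : 0 ≤ δ) (hδ1 : δ ≤ 1) : (s + δ) ^ r ≤ s ^ r + r * δ * (s + 1) := by
  have h := rpow_le_of_le_of_one_le (p := r - 1) (by linarith) (by linarith) (add_nonneg hs hδ0)
    (by linarith : s + δ ≤ s + 1) (by linarith)
  have : r * δ * (s + δ) ^ (r - 1) ≤ r * δ * (s + 1) :=
    mul_le_mul_of_nonneg_left h (by positivity)
  linarith [add_rpow_le_rpow_add_mul hr1 hs hδ0]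

lemma rpow_le_one_add_mul_add_of_le_one (hr1 : 1 ≤ r) (hr2 : r ≤ 2) {K a g b : ℝ} (hK : 0 ≤ K)
    (ha : 0 ≤ a) (hgb : |g| ≤ b) (hb1 : b ≤ 1) (hab : a ≤ 1 + g + K * b ^ r) :
    a ^ r ≤ 1 + r * g + (K + 3) ^ 2 * b ^ r := by
  have hb : 0 ≤ b := (abs_nonneg g).trans hgb
  have hbr : b ^ r ≤ b := Real.rpow_le_self_of_le_one hb hb1 hr1
  have hb2 : b ^ 2 ≤ b ^ r := by
    simpa using Real.rpow_le_rpow_of_exponent_ge' hb hb1 (by linarith) hr2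
  have hKbr : 0 ≤ K * b ^ r := mul_nonneg hK (Real.rpow_nonneg hb r)
  have hg := abs_le.1 hgb
  set u := g + K * b ^ r
  have hu : -1 ≤ u := by linarith
  have hu2 : u ^ 2 ≤ (1 + K) ^ 2 * b ^ r := by
    have : |u| ≤ (1 + K) * b := abs_le.2 ⟨by nlinarith, by nlinarith⟩
    nlinarith [sq_abs u, abs_nonneg u]
  calc a ^ r ≤ (1 + u) ^ r := Real.rpow_le_rpow ha (by linarith) (by linarith)
    _ ≤ 1 + r * u + u ^ 2 := one_add_rpow_le_one_add_mul_add_sq hr1 hr2 hu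
    _ ≤ 1 + r * g + (K + 3) ^ 2 * b ^ r := by nlinarith

lemma rpow_le_one_add_mul_add_of_one_lt (hr1 : 1 ≤ r) (hr2 : r ≤ 2) {a g b : ℝ} (ha : 0 ≤ a)
    (hgb : |g| ≤ b) (hb1 : 1 < b) (hab : a ≤ 1 + b) : a ^ r ≤ 1 + r * g + 9 * b ^ r := by
  have h2r : (2 : ℝ) ^ r ≤ 4 := by
    have := Real.rpow_le_rpow_of_exponent_le one_le_two hr2
    norm_num at this
    exact this
  have hbr : b ≤ b ^ r := Real.self_le_rpow_of_one_le hb1.le hr1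
  calc a ^ r ≤ (2 * b) ^ r := Real.rpow_le_rpow ha (by linarith) (by linarith)
    _ = 2 ^ r * b ^ r := Real.mul_rpow zero_le_two (by linarith)
    _ ≤ 1 + r * g + 9 * b ^ r := by
      nlinarith [mul_le_mul_of_nonneg_right h2r (Real.rpow_nonneg (by linarith : 0 ≤ b) r),
        mul_nonneg (by linarith : 0 ≤ r) (by linarith [neg_abs_le g] : 0 ≤ g + b),
        mul_nonneg (by linarith : 0 ≤ 2 - r) (by linarith : 0 ≤ b)]

end RealInequalities

namespace Seminorm

variable {B : Type*} [NormedAddCommGroup B] [NormedSpace ℝ B]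

/-- The modulus of smoothness of `N` is at most `K t ^ r / 2`. -/
def SmoothOfPowerType (N : Seminorm ℝ B) (r K : ℝ) : Prop :=
  ∀ t : ℝ, 0 < t → ∀ x y : B, N x = 1 → N y = 1 → N (x + t • y) + N (x - t • y) - 2 ≤ K * t ^ r

def HasRPowTaylorBound (N : Seminorm ℝ B) (r D : ℝ) : Prop :=
  ∀ x : B, ∃ f : B →L[ℝ] ℝ, (∀ v, f v ≤ r * N x ^ (r - 1) * N v) ∧
    ∀ v, N (x + v) ^ r ≤ N x ^ r + f v + D * N v ^ r

lemma lipschitzWith_of_le_mul_norm (N : Seminorm ℝ B) {C : ℝ} (hC : 0 ≤ C)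
    (hN : ∀ x, N x ≤ C * ‖x‖) : LipschitzWith (Real.toNNReal C) N :=
  LipschitzWith.of_dist_le_mul fun x y => by
    rw [Real.dist_eq, Real.coe_toNNReal C hC, dist_eq_norm]
    exact (abs_sub_map_le_sub N x y).trans (hN _)

lemma exists_le_eq (N : Seminorm ℝ B) (x : B) :
    ∃ g : B →ₗ[ℝ] ℝ, (∀ y, g y ≤ N y) ∧ g x = N x := by
  have hker : ∀ c : ℝ, c • x = 0 → RingHom.id ℝ c • N x = 0 := fun c hc => by
    rcases smul_eq_zero.1 hc with rfl | rfl <;> simp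
  set p := LinearPMap.mkSpanSingleton' x (N x) hker
  have hp : ∀ z : p.domain, p z ≤ N z := by
    rintro ⟨z, hz⟩
    obtain ⟨t, rfl⟩ := Submodule.mem_span_singleton.1 hz
    rw [LinearPMap.mkSpanSingleton'_apply, map_smul_eq_mul, Real.norm_eq_abs, RingHom.id_apply,
      smul_eq_mul]
    exact mul_le_mul_of_nonneg_right (le_abs_self t) (apply_nonneg N x)
  obtain ⟨g, hgp, hgN⟩ := exists_extension_of_le_sublinear p N
    (fun c hc y => by rw [map_smul_eq_mul, Real.norm_eq_abs, abs_of_pos hc]) (map_add_le_add N) hp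
  exact ⟨g, hgN, (hgp ⟨x, Submodule.mem_span_singleton_self x⟩).trans
    (LinearPMap.mkSpanSingleton'_apply_self x (N x) hker _)⟩

lemma abs_apply_le_of_le {N : Seminorm ℝ B} {g : B →ₗ[ℝ] ℝ} (hg : ∀ y, g y ≤ N y) (y : B) :
    |g y| ≤ N y :=
  abs_le.2 ⟨by linarith [map_neg g y ▸ map_neg_eq_map N y ▸ hg (-y)], hg y⟩

namespace SmoothOfPowerType

variable {N : Seminorm ℝ B} {r K : ℝ}

lemma rpow_add_le_of_eq_one (hr1 : 1 ≤ r) (hr2 : r ≤ 2) (hK : 0 ≤ K)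
    (hN : N.SmoothOfPowerType r K) {x : B} (hx : N x = 1) {g : B →ₗ[ℝ] ℝ}
    (hg : ∀ y, g y ≤ N y) (hgx : g x = 1) (y : B) :
    N (x + y) ^ r ≤ 1 + r * g y + (K + 3) ^ 2 * N y ^ r := by
  have hgy := abs_apply_le_of_le hg y
  have hxy : N (x + y) ≤ 1 + N y := hx ▸ map_add_le_add N x y
  rcases le_or_gt (N y) 1 with hb1 | hb1
  · refine rpow_le_one_add_mul_add_of_le_one hr1 hr2 hK (apply_nonneg N _) hgy hb1 ?_
    rcases (apply_nonneg N y).eq_or_lt with hb | hb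
    · have hg0 : g y = 0 := abs_nonpos_iff.1 (hb ▸ hgy)
      rw [← hb] at hxy ⊢
      rw [Real.zero_rpow (by linarith)]
      linarith
    have hsm := hN (N y) hb x ((N y)⁻¹ • y) hx (by
      rw [map_smul_eq_mul, norm_inv, Real.norm_eq_abs, abs_of_pos hb, inv_mul_cancel₀ hb.ne'])
    rw [smul_smul, mul_inv_cancel₀ hb.ne', one_smul] at hsm
    have hxy' := hg (x - y)
    rw [map_sub, hgx] at hxy'
    linarith
  · nlinarith [rpow_le_one_add_mul_add_of_one_lt hr1 hr2 (apply_nonneg N _) hgy hb1 hxy,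
      mul_le_mul_of_nonneg_right (by nlinarith : (9 : ℝ) ≤ (K + 3) ^ 2)
        (Real.rpow_nonneg (apply_nonneg N y) r)]

theorem hasRPowTaylorBound (hr1 : 1 ≤ r) (hr2 : r ≤ 2) (hK : 0 ≤ K)
    (hN : N.SmoothOfPowerType r K) {C : ℝ} (hC : ∀ x, N x ≤ C * ‖x‖) :
    N.HasRPowTaylorBound r ((K + 3) ^ 2) := by
  intro x
  have hD : 1 ≤ (K + 3) ^ 2 := by nlinarith
  rcases (apply_nonneg N x).eq_or_lt with hx | hx
  · refine ⟨0, fun v => ?_, fun v => ?_⟩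
    · simpa using mul_nonneg (mul_nonneg (by linarith) (Real.rpow_nonneg hx.le _))
        (apply_nonneg N v)
    · have : N (x + v) ≤ N v := by simpa [← hx] using map_add_le_add N x v
      rw [← hx, Real.zero_rpow (by linarith), zero_apply, zero_add, zero_add]
      calc N (x + v) ^ r ≤ N v ^ r := Real.rpow_le_rpow (apply_nonneg N _) this (by linarith)
        _ ≤ (K + 3) ^ 2 * N v ^ r := le_mul_of_one_le_left (by positivity) hD
  obtain ⟨g, hg, hgx⟩ := N.exists_le_eq x
  have hgC : ∀ y, ‖g y‖ ≤ C * ‖y‖ := fun y => (abs_apply_le_of_le hg y).trans (hC y)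
  refine ⟨(r * N x ^ (r - 1)) • g.mkContinuous C hgC, fun v => ?_, fun v => ?_⟩
  · exact mul_le_mul_of_nonneg_left (hg v) (by positivity)
  -- `g` also supports `N` at the normalized point `(N x)⁻¹ • x`
  have h := rpow_add_le_of_eq_one hr1 hr2 hK hN (x := (N x)⁻¹ • x) (y := (N x)⁻¹ • v) (by
    rw [map_smul_eq_mul, norm_inv, Real.norm_eq_abs, abs_of_pos hx, inv_mul_cancel₀ hx.ne'])
    hg (by rw [map_smul, hgx, smul_eq_mul, inv_mul_cancel₀ hx.ne'])
  rw [← smul_add, map_smul_eq_mul N, map_smul_eq_mul N, map_smul g, smul_eq_mul, norm_inv,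
    Real.norm_eq_abs, abs_of_pos hx, Real.mul_rpow (by positivity) (apply_nonneg N _),
    Real.mul_rpow (by positivity) (apply_nonneg N _), Real.inv_rpow hx.le] at h
  have hxr : 0 < N x ^ r := by positivity
  simp only [smul_apply, LinearMap.mkContinuous_apply, smul_eq_mul]
  rw [Real.rpow_sub_one hx.ne']
  field_simp at h ⊢
  linarith

end SmoothOfPowerType

lemma rpow_add_le_of_sub_le {N : Seminorm ℝ B} {r D : ℝ} (hr1 : 1 ≤ r) (hr2 : r ≤ 2)
    (hD : 0 ≤ D) {x : B} {f : B →L[ℝ] ℝ} (hf : ∀ v, f v ≤ r * N x ^ (r - 1) * N v)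
    (hfx : ∀ v, N (x + v) ^ r ≤ N x ^ r + f v + D * N v ^ r) {z : B} {δ : ℝ} (hδ0 : 0 ≤ δ)
    (hδ1 : δ ≤ 1) (hzx : N (z - x) ≤ δ) (y : B) :
    N (z + y) ^ r ≤ N z ^ r + D * N y ^ r + δ * (r * (2 * (N z + 1) + D * (N y + 1))) + f y := by
  have hx : N x ≤ N z + δ := by
    simpa using (map_sub_le_add N z (z - x)).trans (by linarith)
  have hxr : N x ^ r ≤ N z ^ r + r * δ * (N z + 1) :=
    (Real.rpow_le_rpow (apply_nonneg N x) hx (by linarith)).trans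
      (add_rpow_le_rpow_add_mul_add_one hr1 hr2 (apply_nonneg N z) hδ0 hδ1)
  have hfzx : f (z - x) ≤ r * (N z + 1) * δ := by
    have := rpow_le_of_le_of_one_le (p := r - 1) (by linarith) (by linarith) (apply_nonneg N x)
      (by linarith : N x ≤ N z + 1) (by linarith [apply_nonneg N z])
    calc f (z - x) ≤ r * N x ^ (r - 1) * N (z - x) := hf _
      _ ≤ r * (N z + 1) * δ := by gcongr
  have hyr : N (z - x + y) ^ r ≤ N y ^ r + r * δ * (N y + 1) :=
    (Real.rpow_le_rpow (apply_nonneg N _) ((map_add_le_add N _ _).trans (by linarith))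
      (by linarith)).trans (add_rpow_le_rpow_add_mul_add_one hr1 hr2 (apply_nonneg N y) hδ0 hδ1)
  have hexp := hfx (z - x + y)
  rw [show x + (z - x + y) = z + y by abel, map_add f] at hexp
  linarith [mul_le_mul_of_nonneg_left hyr hD]

end Seminorm

lemma RSmooth.exists_seminorm {B : Type*} [NormedAddCommGroup B] [NormedSpace ℝ B] {r : ℝ}
    (h : RSmooth B r) :
    ∃ (N : Seminorm ℝ B) (c C K : ℝ), 0 < c ∧ 0 < C ∧ 0 ≤ K ∧ (∀ x, c * ‖x‖ ≤ N x) ∧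
      (∀ x, N x ≤ C * ‖x‖) ∧ N.SmoothOfPowerType r K := by
  obtain ⟨N, hadd, hsmul, ⟨c, C, hc, hNc⟩, K, hK⟩ := h
  refine ⟨.of N hadd fun a x => by rw [hsmul, Real.norm_eq_abs], c, max C 1, max K 0, hc,
    by positivity, le_max_right _ _, fun x => (hNc x).1, fun x => (hNc x).2.trans ?_,
    fun t ht x y hx hy => (hK t ht x y hx hy).trans ?_⟩
  · exact mul_le_mul_of_nonneg_right (le_max_left _ _) (norm_nonneg x)
  · exact mul_le_mul_of_nonneg_right (le_max_left _ _) (by positivity)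

lemma le_of_forall_le_add_mul {a b M : ℝ} (h : ∀ δ : ℝ, 0 < δ → δ ≤ 1 → a ≤ b + δ * M) :
    a ≤ b := by
  have hlim : Tendsto (fun δ : ℝ => b + δ * M) (𝓝[>] 0) (𝓝 b) :=
    ((by fun_prop : Continuous fun δ : ℝ => b + δ * M).tendsto' 0 b (by simp)).mono_left
      nhdsWithin_le_nhds
  exact ge_of_tendsto hlim (eventually_of_mem (Ioc_mem_nhdsGT one_pos) fun δ hδ => h δ hδ.1 hδ.2)

namespace MeasureTheory

open Function

variable {Ω : Type*} {m m₀ : MeasurableSpace Ω} {μ : Measure Ω}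

lemma exists_partition_dist_lt {X : Type*} [PseudoMetricSpace X]
    [TopologicalSpace.SeparableSpace X] [Nonempty X] {S : Ω → X}
    (hS : StronglyMeasurable[m] S) {ε : ℝ} (hε : 0 < ε) :
    ∃ (A : ℕ → Set Ω) (x : ℕ → X), (∀ j, MeasurableSet[m] (A j)) ∧
      Pairwise (Disjoint on A) ∧ ⋃ j, A j = Set.univ ∧ ∀ j, ∀ ω ∈ A j, dist (S ω) (x j) < ε := by
  set x := TopologicalSpace.denseSeq X
  set U : ℕ → Set Ω := fun j => {ω | dist (S ω) (x j) < ε}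
  have hU : ∀ j, MeasurableSet[m] (U j) := fun j =>
    (hS.dist stronglyMeasurable_const).measurable measurableSet_Iio
  refine ⟨disjointed U, x, MeasurableSet.disjointed hU, disjoint_disjointed U, ?_,
    fun j ω hω => disjointed_subset U j hω⟩
  rw [iUnion_disjointed, Set.eq_univ_iff_forall]
  exact fun ω => Set.mem_iUnion.2 ((TopologicalSpace.denseRange_denseSeq X).exists_dist_lt _ hε)

variable {B : Type*} [NormedAddCommGroup B] {r : ℝ}

lemma MemLp.integrable_norm_rpow_ofReal (hr : 0 < r) {f : Ω → B} (hf : MemLp f (.ofReal r) μ) :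
    Integrable (fun ω => ‖f ω‖ ^ r) μ := by
  simpa [hr.le] using hf.integrable_norm_rpow (by simpa using hr) ENNReal.ofReal_ne_top

lemma memLp_ofReal_of_lintegral_enorm_rpow_ne_top (hr : 0 < r) {f : Ω → B}
    (hf : AEStronglyMeasurable f μ) (hfr : ∫⁻ ω, ‖f ω‖ₑ ^ r ∂μ ≠ ⊤) : MemLp f (.ofReal r) μ :=
  ⟨hf, (eLpNorm_lt_top_iff_lintegral_rpow_enorm_lt_top (by simpa using hr) ENNReal.ofReal_ne_top).2
    (by simpa [hr.le] using hfr.lt_top)⟩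

lemma MemLp.lintegral_enorm_rpow_eq_ofReal (hr : 0 < r) {f : Ω → B}
    (hf : MemLp f (.ofReal r) μ) :
    ∫⁻ ω, ‖f ω‖ₑ ^ r ∂μ = ENNReal.ofReal (∫ ω, ‖f ω‖ ^ r ∂μ) := by
  rw [ofReal_integral_eq_lintegral_ofReal
    (hf.integrable_norm_rpow_ofReal hr)
    (ae_of_all _ fun ω => by positivity)]
  simp_rw [← ENNReal.ofReal_rpow_of_nonneg (norm_nonneg _) hr.le, ofReal_norm]

variable [NormedSpace ℝ B]

lemma MemLp.seminorm_comp {N : Seminorm ℝ B} {C : ℝ} (hC : 0 ≤ C) (hN : ∀ x, N x ≤ C * ‖x‖)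
    {f : Ω → B} {p : ℝ≥0∞} (hf : MemLp f p μ) : MemLp (fun ω => N (f ω)) p μ :=
  hf.of_le_mul ((N.lipschitzWith_of_le_mul_norm hC hN).continuous.comp_aestronglyMeasurable hf.1)
    (ae_of_all _ fun ω => by rw [Real.norm_of_nonneg (apply_nonneg N _)]; exact hN _)

lemma MemLp.integrable_seminorm_rpow {N : Seminorm ℝ B} {C : ℝ} (hC : 0 ≤ C)
    (hN : ∀ x, N x ≤ C * ‖x‖) (hr : 0 < r) {f : Ω → B} (hf : MemLp f (.ofReal r) μ) :
    Integrable (fun ω => N (f ω) ^ r) μ := by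
  simpa [Real.norm_of_nonneg (apply_nonneg N _)] using
    (hf.seminorm_comp hC hN).integrable_norm_rpow_ofReal hr

variable [CompleteSpace B]

lemma setIntegral_clm_comp_eq_zero (hm : m ≤ m₀) [SigmaFinite (μ.trim hm)] {ξ : Ω → B}
    (hξ : Integrable ξ μ) (hcond : μ[ξ | m] =ᵐ[μ] 0) {s : Set Ω} (hs : MeasurableSet[m] s)
    (f : B →L[ℝ] ℝ) : ∫ ω in s, f (ξ ω) ∂μ = 0 := by
  rw [f.integral_comp_comm hξ.integrableOn, ← setIntegral_condExp hm hξ hs,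
    setIntegral_congr_ae (hm s hs) (hcond.mono fun ω hω _ => hω)]
  simp

lemma integral_le_of_le_add_clm_on_partition (hm : m ≤ m₀) [SigmaFinite (μ.trim hm)]
    {ξ : Ω → B} (hξ : Integrable ξ μ) (hcond : μ[ξ | m] =ᵐ[μ] 0) {ι : Type*} [Countable ι]
    {A : ι → Set Ω} (hA : ∀ j, MeasurableSet[m] (A j)) (hAd : Pairwise (Disjoint on A))
    (hAU : ⋃ j, A j = Set.univ) {φ ψ : Ω → ℝ} (hφ : Integrable φ μ) (hψ : Integrable ψ μ)
    (f : ι → B →L[ℝ] ℝ) (hle : ∀ j, ∀ ω ∈ A j, φ ω ≤ ψ ω + f j (ξ ω)) :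
    ∫ ω, φ ω ∂μ ≤ ∫ ω, ψ ω ∂μ := by
  have hsum : ∀ {g : Ω → ℝ}, Integrable g μ →
      HasSum (fun j => ∫ ω in A j, g ω ∂μ) (∫ ω, g ω ∂μ) := fun hg => by
    simpa [hAU] using hasSum_integral_iUnion (fun j => hm _ (hA j)) hAd hg.integrableOn
  refine hasSum_le (fun j => ?_) (hsum hφ) (hsum hψ)
  have hfξ : Integrable (fun ω => f j (ξ ω)) μ := (f j).integrable_comp hξ
  calc ∫ ω in A j, φ ω ∂μ ≤ ∫ ω in A j, (ψ ω + f j (ξ ω)) ∂μ :=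
        setIntegral_mono_on hφ.integrableOn (hψ.add hfξ).integrableOn (hm _ (hA j)) (hle j)
    _ = ∫ ω in A j, ψ ω ∂μ := by
        rw [integral_add hψ.integrableOn hfξ.integrableOn,
          setIntegral_clm_comp_eq_zero hm hξ hcond (hA j), add_zero]

variable [TopologicalSpace.SeparableSpace B] {N : Seminorm ℝ B} {C D : ℝ}

lemma integral_seminorm_rpow_add_le_add_mul (hr1 : 1 ≤ r) (hr2 : r ≤ 2) (hC : 0 < C)
    (hN : ∀ x, N x ≤ C * ‖x‖) (hD : 0 ≤ D) (hT : N.HasRPowTaylorBound r D) (hm : m ≤ m₀)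
    [IsFiniteMeasure μ] {S ξ : Ω → B} (hS : StronglyMeasurable[m] S)
    (hSr : MemLp S (.ofReal r) μ) (hξr : MemLp ξ (.ofReal r) μ) (hcond : μ[ξ | m] =ᵐ[μ] 0)
    {δ : ℝ} (hδ0 : 0 < δ) (hδ1 : δ ≤ 1) :
    ∫ ω, N (S ω + ξ ω) ^ r ∂μ ≤ ∫ ω, N (S ω) ^ r ∂μ + D * ∫ ω, N (ξ ω) ^ r ∂μ +
      δ * ∫ ω, r * (2 * (N (S ω) + 1) + D * (N (ξ ω) + 1)) ∂μ := by
  choose f hf hfx using hT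
  obtain ⟨A, x, hA, hAd, hAU, hSx⟩ := exists_partition_dist_lt hS (div_pos hδ0 hC)
  have hr0 : 0 < r := by linarith
  have hr1' : 1 ≤ ENNReal.ofReal r := by simpa using hr1
  have hNS := hSr.integrable_seminorm_rpow hC.le hN hr0
  have hNξ := hξr.integrable_seminorm_rpow hC.le hN hr0
  have hE : Integrable (fun ω => r * (2 * (N (S ω) + 1) + D * (N (ξ ω) + 1))) μ :=
    ((((hSr.seminorm_comp hC.le hN).integrable hr1').add (integrable_const 1)).const_mul 2
      |>.add ((((hξr.seminorm_comp hC.le hN).integrable hr1').add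
        (integrable_const 1)).const_mul D)).const_mul r
  calc ∫ ω, N (S ω + ξ ω) ^ r ∂μ
      ≤ ∫ ω, (N (S ω) ^ r + D * N (ξ ω) ^ r +
          δ * (r * (2 * (N (S ω) + 1) + D * (N (ξ ω) + 1)))) ∂μ := by
        refine integral_le_of_le_add_clm_on_partition hm (hξr.integrable hr1') hcond hA hAd hAU
          ((hSr.add hξr).integrable_seminorm_rpow hC.le hN hr0)
          ((hNS.add (hNξ.const_mul D)).add (hE.const_mul δ)) (fun j => f (x j))
          fun j ω hω => N.rpow_add_le_of_sub_le hr1 hr2 hD (hf _) (hfx _) hδ0.le hδ1 ?_ (ξ ω)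
        calc N (S ω - x j) ≤ C * ‖S ω - x j‖ := hN _
          _ ≤ C * (δ / C) := by
            rw [← dist_eq_norm]
            exact mul_le_mul_of_nonneg_left (hSx j ω hω).le hC.le
          _ = δ := mul_div_cancel₀ δ hC.ne'
    _ = _ := by
        have hψ : Integrable (fun ω => N (S ω) ^ r + D * N (ξ ω) ^ r) μ :=
          hNS.add (hNξ.const_mul D)
        rw [integral_add hψ (hE.const_mul δ), integral_add hNS (hNξ.const_mul D),
          integral_const_mul, integral_const_mul]

lemma integral_seminorm_rpow_add_le (hr1 : 1 ≤ r) (hr2 : r ≤ 2) (hC : 0 < C)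
    (hN : ∀ x, N x ≤ C * ‖x‖) (hD : 0 ≤ D) (hT : N.HasRPowTaylorBound r D) (hm : m ≤ m₀)
    [IsFiniteMeasure μ] {S ξ : Ω → B} (hS : StronglyMeasurable[m] S)
    (hSr : MemLp S (.ofReal r) μ) (hξr : MemLp ξ (.ofReal r) μ) (hcond : μ[ξ | m] =ᵐ[μ] 0) :
    ∫ ω, N (S ω + ξ ω) ^ r ∂μ ≤ ∫ ω, N (S ω) ^ r ∂μ + D * ∫ ω, N (ξ ω) ^ r ∂μ :=
  le_of_forall_le_add_mul fun _ hδ0 hδ1 =>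
    integral_seminorm_rpow_add_le_add_mul hr1 hr2 hC hN hD hT hm hS hSr hξr hcond hδ0 hδ1

theorem integral_seminorm_rpow_sum_le (hr1 : 1 ≤ r) (hr2 : r ≤ 2) (hC : 0 < C)
    (hN : ∀ x, N x ≤ C * ‖x‖) (hD : 0 ≤ D) (hT : N.HasRPowTaylorBound r D) [IsFiniteMeasure μ]
    {𝓕 : ℕ → MeasurableSpace Ω} (h𝓕 : Monotone 𝓕) (h𝓕m : ∀ i, 𝓕 i ≤ m₀) {ξ : ℕ → Ω → B}
    (hξ : ∀ i, StronglyMeasurable[𝓕 i] (ξ i)) (hcond : ∀ i, 1 ≤ i → μ[ξ i | 𝓕 (i - 1)] =ᵐ[μ] 0)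
    (n : ℕ) (hξr : ∀ i ∈ Finset.Icc 1 n, MemLp (ξ i) (.ofReal r) μ) :
    ∫ ω, N (∑ i ∈ Finset.Icc 1 n, ξ i ω) ^ r ∂μ ≤
      D * ∑ i ∈ Finset.Icc 1 n, ∫ ω, N (ξ i ω) ^ r ∂μ := by
  induction n with
  | zero => simp [Real.zero_rpow (by linarith : r ≠ 0)]
  | succ n ih =>
    have hsub : Finset.Icc 1 n ⊆ Finset.Icc 1 (n + 1) := Finset.Icc_subset_Icc_right n.le_succ
    have hS : StronglyMeasurable[𝓕 n] fun ω => ∑ i ∈ Finset.Icc 1 n, ξ i ω :=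
      Finset.stronglyMeasurable_fun_sum _ fun i hi => (hξ i).mono (h𝓕 (Finset.mem_Icc.1 hi).2)
    have hstep := integral_seminorm_rpow_add_le hr1 hr2 hC hN hD hT (h𝓕m n) hS
      (memLp_finsetSum _ fun i hi => hξr i (hsub hi))
      (hξr (n + 1) (by simp)) (by simpa using hcond (n + 1) (by omega))
    simp only [Finset.sum_Icc_succ_top (by omega : 1 ≤ n + 1), mul_add]
    linarith [ih fun i hi => hξr i (hsub hi)]

theorem integral_norm_rpow_sum_le {c : ℝ} (hr1 : 1 ≤ r) (hr2 : r ≤ 2)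
    (hc : 0 < c) (hC : 0 < C) (hNc : ∀ x, c * ‖x‖ ≤ N x) (hNC : ∀ x, N x ≤ C * ‖x‖) (hD : 0 ≤ D)
    (hT : N.HasRPowTaylorBound r D) [IsFiniteMeasure μ] {𝓕 : ℕ → MeasurableSpace Ω}
    (h𝓕 : Monotone 𝓕) (h𝓕m : ∀ i, 𝓕 i ≤ m₀) {ξ : ℕ → Ω → B}
    (hξ : ∀ i, StronglyMeasurable[𝓕 i] (ξ i)) (hcond : ∀ i, 1 ≤ i → μ[ξ i | 𝓕 (i - 1)] =ᵐ[μ] 0)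
    (n : ℕ) (hξr : ∀ i ∈ Finset.Icc 1 n, MemLp (ξ i) (.ofReal r) μ) :
    ∫ ω, ‖∑ i ∈ Finset.Icc 1 n, ξ i ω‖ ^ r ∂μ ≤
      (C / c) ^ r * D * ∑ i ∈ Finset.Icc 1 n, ∫ ω, ‖ξ i ω‖ ^ r ∂μ := by
  have hr0 : 0 < r := by linarith
  have hcr : 0 < c ^ r := by positivity
  have hlow (x : B) : ‖x‖ ^ r ≤ (c ^ r)⁻¹ * N x ^ r := by
    rw [le_inv_mul_iff₀ hcr, ← Real.mul_rpow hc.le (norm_nonneg x)]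
    exact Real.rpow_le_rpow (by positivity) (hNc x) hr0.le
  have hup (x : B) : N x ^ r ≤ C ^ r * ‖x‖ ^ r := by
    rw [← Real.mul_rpow hC.le (norm_nonneg x)]
    exact Real.rpow_le_rpow (apply_nonneg N x) (hNC x) hr0.le
  have hS := memLp_finsetSum _ hξr
  calc ∫ ω, ‖∑ i ∈ Finset.Icc 1 n, ξ i ω‖ ^ r ∂μ
      ≤ (c ^ r)⁻¹ * ∫ ω, N (∑ i ∈ Finset.Icc 1 n, ξ i ω) ^ r ∂μ := by
        rw [← integral_const_mul]
        exact integral_mono (hS.integrable_norm_rpow_ofReal hr0)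
          ((hS.integrable_seminorm_rpow hC.le hNC hr0).const_mul _) fun ω => hlow _
    _ ≤ (c ^ r)⁻¹ * (D * ∑ i ∈ Finset.Icc 1 n, ∫ ω, N (ξ i ω) ^ r ∂μ) := by
        gcongr
        exact integral_seminorm_rpow_sum_le hr1 hr2 hC hNC hD hT h𝓕 h𝓕m hξ hcond n hξr
    _ ≤ (c ^ r)⁻¹ * (D * ∑ i ∈ Finset.Icc 1 n, C ^ r * ∫ ω, ‖ξ i ω‖ ^ r ∂μ) := by
        gcongr with i hi
        rw [← integral_const_mul]
        exact integral_mono ((hξr i hi).integrable_seminorm_rpow hC.le hNC hr0)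
          (((hξr i hi).integrable_norm_rpow_ofReal hr0).const_mul _) fun ω => hup _
    _ = (C / c) ^ r * D * ∑ i ∈ Finset.Icc 1 n, ∫ ω, ‖ξ i ω‖ ^ r ∂μ := by
        rw [← Finset.mul_sum, Real.div_rpow hC.le hc.le]
        ring

end MeasureTheory

/-- In an `r`-smooth separable Banach space there is `D ≥ 1` with
`E‖ξ_1 + ⋯ + ξ_n‖^r ≤ D ∑ E‖ξ_i‖^r` for all martingale difference sequences. -/
theorem rsmooth_martingale_inequality
    {B : Type*} [NormedAddCommGroup B] [NormedSpace ℝ B] [CompleteSpace B]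
    [TopologicalSpace.SeparableSpace B]
    (r : ℝ) (hr1 : 1 < r) (hr2 : r ≤ 2) (hsm : RSmooth B r) :
    ∃ D : ℝ≥0∞, 1 ≤ D ∧ D ≠ ⊤ ∧
      ∀ (Ω : Type) (mΩ : MeasurableSpace Ω) (μ : Measure Ω), IsProbabilityMeasure μ →
      ∀ (𝓕 : ℕ → MeasurableSpace Ω), Monotone 𝓕 → (∀ i, 𝓕 i ≤ mΩ) →
      ∀ (ξ : ℕ → Ω → B) (n : ℕ),
        (∀ i, StronglyMeasurable[𝓕 i] (ξ i)) →
        (∀ i, Integrable (ξ i) μ) →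
        (∀ i, 1 ≤ i → μ[ξ i | 𝓕 (i - 1)] =ᵐ[μ] 0) →
        ∫⁻ ω, (‖∑ i ∈ Finset.Icc 1 n, ξ i ω‖₊ : ℝ≥0∞) ^ r ∂μ
          ≤ D * ∑ i ∈ Finset.Icc 1 n, ∫⁻ ω, (‖ξ i ω‖₊ : ℝ≥0∞) ^ r ∂μ := by
  obtain ⟨N, c, C, K, hc, hC, hK, hNc, hNC, hN⟩ := hsm.exists_seminorm
  have hT := hN.hasRPowTaylorBound hr1.le hr2 hK hNC
  have hr0 : 0 < r := by linarith
  set D := (C / c) ^ r * (K + 3) ^ 2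
  refine ⟨.ofReal (max D 1), by simp, ENNReal.ofReal_ne_top, ?_⟩
  intro Ω _ μ _ 𝓕 h𝓕 h𝓕m ξ n hξ _ hcond
  simp only [← enorm_eq_nnnorm]
  by_cases hfin : ∀ i ∈ Finset.Icc 1 n, ∫⁻ ω, ‖ξ i ω‖ₑ ^ r ∂μ ≠ ⊤
  · have hξr (i) (hi : i ∈ Finset.Icc 1 n) : MemLp (ξ i) (.ofReal r) μ :=
      memLp_ofReal_of_lintegral_enorm_rpow_ne_top hr0
        ((hξ i).mono (h𝓕m i)).aestronglyMeasurable (hfin i hi)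
    have hsum := integral_norm_rpow_sum_le hr1.le hr2 hc hC hNc hNC (by positivity) hT h𝓕 h𝓕m hξ
      hcond n hξr
    rw [(memLp_finsetSum _ hξr).lintegral_enorm_rpow_eq_ofReal hr0,
      Finset.sum_congr rfl fun i hi => (hξr i hi).lintegral_enorm_rpow_eq_ofReal hr0,
      ← ENNReal.ofReal_sum_of_nonneg fun i _ => by positivity, ← ENNReal.ofReal_mul (by positivity)]
    exact ENNReal.ofReal_le_ofReal (hsum.trans (by gcongr; exact le_max_left _ _))
  · push Not at hfin
    obtain ⟨i, hi, htop⟩ := hfin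
    rw [ENNReal.sum_eq_top.2 ⟨i, hi, htop⟩, ENNReal.mul_top (by simp)]
    exact le_top
end
end
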